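/- The unitary matrices U_m (m = 0,…,n−1) with entries ⟨j|U_m|k⟩ = (1/√d) exp[2πi jk/d + 2πi(j + kd)m/n] form an unweighted unitary 1-design in dimension d for every n ≥ d², i.e. (1/n)∑_m U_m ⊗ U_m† = T/d. -/

import Mathlib

/-!
Write `ω_N = exp(2πi/N)`, so that `Udes d n m j k = d^{-1/2} ω_d^{jk} ω_n^{(j + kd) m}`. Everything
reduces to the orthogonality relation `∑_{m < N} ω_N^{am} = N·[N ∣ a]` for `a ∈ ℤ`, which becomes
`N·[a = 0]` once `|a| < N`. Unitarity is this relation for `N = d` and `a = j - j'`. In the design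
sum, the `m`-dependence of `U_m j k · conj (U_m k' j')` is `ω_n^{am}` with
`a = (j - k') + (k - j') d`; as `|a| < d² ≤ n`, only `a = 0` survives, and uniqueness of base-`d`
digits turns `a = 0` into `j = k'`, `k = j'`.
-/

open Matrix
open scoped ComplexConjugate

/-- The matrices with entries `⟨j|U_m|k⟩ = (1/√d) exp[2πi jk/d + 2πi (j + k d) m / n]`. -/
noncomputable def Udes (d n : ℕ) (m : Fin n) : Matrix (Fin d) (Fin d) ℂ :=
  Matrix.of fun j k : Fin d =>
    (1 / (Real.sqrt d : ℂ)) *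
      Complex.exp (2 * Real.pi * Complex.I * (((j : ℕ) : ℂ) * ((k : ℕ) : ℂ) / (d : ℂ))
        + 2 * Real.pi * Complex.I * ((((j : ℕ) : ℂ) + ((k : ℕ) : ℂ) * (d : ℂ)) * ((m : ℕ) : ℂ) / (n : ℂ)))

open Finset Complex

theorem geom_sum_eq_ite_of_pow_eq_one {K : Type*} [DivisionRing K] [DecidableEq K] {z : K} {n : ℕ}
    (h : z ^ n = 1) : ∑ i ∈ range n, z ^ i = if z = 1 then (n : K) else 0 := by
  split_ifs with hz
  · simp [hz]
  · rw [geom_sum_eq hz, h, sub_self, zero_div]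

theorem Complex.exp_two_pi_I_mul_int_div_eq_one_iff {n : ℕ} (hn : n ≠ 0) (a : ℤ) :
    exp (2 * Real.pi * I * (a / n)) = 1 ↔ (n : ℤ) ∣ a := by
  have hn' : (n : ℂ) ≠ 0 := Nat.cast_ne_zero.mpr hn
  rw [exp_eq_one_iff]
  constructor
  · rintro ⟨k, hk⟩
    refine ⟨k, ?_⟩
    field_simp at hk
    exact_mod_cast hk
  · rintro ⟨k, rfl⟩
    exact ⟨k, by push_cast; field_simp⟩

theorem Complex.sum_exp_two_pi_I_mul_int_mul_div (n : ℕ) (a : ℤ) :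
    ∑ m : Fin n, exp (2 * Real.pi * I * (a * m / n)) = if (n : ℤ) ∣ a then (n : ℂ) else 0 := by
  rcases eq_or_ne n 0 with rfl | hn
  · simp
  set z := exp (2 * Real.pi * I * (a / n))
  have hpow : ∀ m : ℕ, exp (2 * Real.pi * I * (a * m / n)) = z ^ m := fun m => by
    rw [← exp_nat_mul]; ring_nf
  have hzn : z ^ n = 1 := by
    rw [← hpow, mul_div_cancel_right₀ _ (Nat.cast_ne_zero.mpr hn), mul_comm]
    exact exp_int_mul_two_pi_mul_I a
  rw [Fin.sum_univ_eq_sum_range (fun m => exp (2 * Real.pi * I * (a * m / n))),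
    sum_congr rfl (fun m _ => hpow m), geom_sum_eq_ite_of_pow_eq_one hzn]
  exact if_congr (exp_two_pi_I_mul_int_div_eq_one_iff hn a) rfl rfl

theorem Complex.sum_exp_two_pi_I_mul_int_mul_div_of_abs_lt {n : ℕ} {a : ℤ} (ha : |a| < n) :
    ∑ m : Fin n, exp (2 * Real.pi * I * (a * m / n)) = if a = 0 then (n : ℂ) else 0 := by
  rw [sum_exp_two_pi_I_mul_int_mul_div]
  exact if_congr ⟨fun h => Int.eq_zero_of_abs_lt_dvd h ha, fun h => h ▸ dvd_zero _⟩ rfl rfl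

theorem Int.add_mul_eq_zero_iff_of_abs_lt {x y d : ℤ} (hx : |x| < d) :
    x + y * d = 0 ↔ x = 0 ∧ y = 0 := by
  refine ⟨fun h => ?_, fun ⟨hx0, hy0⟩ => by simp [hx0, hy0]⟩
  have hx0 : x = 0 := Int.eq_zero_of_abs_lt_dvd ⟨-y, by linarith⟩ hx
  have hd : d ≠ 0 := by have := abs_nonneg x; omega
  exact ⟨hx0, by simpa [hx0, hd] using h⟩

theorem Udes_apply_mul_conj (d n : ℕ) (m : Fin n) (j k j' k' : Fin d) :
    Udes d n m j k * conj (Udes d n m j' k') =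
      (d : ℂ)⁻¹ * exp (2 * Real.pi * I * (((j * k : ℕ) - (j' * k' : ℕ) : ℂ) / d
        + ((j + k * d : ℕ) - (j' + k' * d : ℕ) : ℂ) * (m : ℕ) / n)) := by
  simp only [Udes, of_apply, map_mul, ← exp_conj, map_add, map_div₀, map_one, conj_I,
    conj_natCast, conj_ofReal, map_ofNat]
  rw [mul_mul_mul_comm, ← exp_add]
  congr 1
  · rw [div_mul_div_comm, one_mul, one_div, ← ofReal_mul,
      Real.mul_self_sqrt (Nat.cast_nonneg d), ofReal_natCast]
  · congr 1; push_cast; ring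

theorem Udes_mem_unitaryGroup (d n : ℕ) (m : Fin n) : Udes d n m ∈ unitaryGroup (Fin d) ℂ := by
  rw [mem_unitaryGroup_iff]
  ext j j'
  have hd : (d : ℂ) ≠ 0 := Nat.cast_ne_zero.mpr j.pos.ne'
  set a : ℤ := (j : ℕ) - (j' : ℕ)
  have hterm : ∀ k : Fin d, Udes d n m j k * conj (Udes d n m j' k) =
      (d : ℂ)⁻¹ * exp (2 * Real.pi * I * (a * (m : ℕ) / n)) *
        exp (2 * Real.pi * I * (a * (k : ℕ) / d)) := fun k => by
    rw [Udes_apply_mul_conj, mul_assoc (d : ℂ)⁻¹ (exp _), ← exp_add]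
    congr 2
    push_cast [a]
    field_simp
    ring
  have ha : |a| < d := by rw [abs_lt]; omega
  have ha0 : a = 0 ↔ j = j' := by rw [sub_eq_zero, Nat.cast_inj, Fin.val_inj]
  simp only [mul_apply, star_apply, RCLike.star_def, hterm, ← mul_sum,
    sum_exp_two_pi_I_mul_int_mul_div_of_abs_lt ha, ha0, one_apply]
  split_ifs with h
  · simp [a, h, hd]
  · simp

theorem Udes_inv_card_mul_sum_mul_conj {d n : ℕ} (hn : d ^ 2 ≤ n) (j j' k k' : Fin d) :
    (n : ℂ)⁻¹ * ∑ m : Fin n, Udes d n m j k * conj (Udes d n m k' j')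
      = if j = k' ∧ j' = k then (d : ℂ)⁻¹ else 0 := by
  have hn0 : (n : ℂ) ≠ 0 := Nat.cast_ne_zero.mpr (by nlinarith [j.pos])
  set x : ℤ := (j : ℕ) - (k' : ℕ)
  set y : ℤ := (k : ℕ) - (j' : ℕ)
  have hterm : ∀ m : Fin n, Udes d n m j k * conj (Udes d n m k' j') =
      (d : ℂ)⁻¹ * exp (2 * Real.pi * I * (((j * k : ℕ) - (k' * j' : ℕ) : ℂ) / d)) *
        exp (2 * Real.pi * I * ((x + y * d : ℤ) * (m : ℕ) / n)) := fun m => by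
    rw [Udes_apply_mul_conj, mul_assoc (d : ℂ)⁻¹ (exp _), ← exp_add]
    congr 2
    push_cast [x, y]
    ring
  have hx : |x| < d := by rw [abs_lt]; omega
  have hxy : |x + y * d| < n := by
    have hy : |y| < d := by rw [abs_lt]; omega
    have hn' : (d : ℤ) ^ 2 ≤ n := by exact_mod_cast hn
    calc |x + y * d| ≤ |x| + |y| * d := by simpa [abs_mul] using abs_add_le x (y * d)
      _ ≤ (d - 1) + (d - 1) * d := by gcongr <;> omega
      _ < n := by nlinarith
  have hxy0 : x + y * d = 0 ↔ j = k' ∧ j' = k := by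
    rw [Int.add_mul_eq_zero_iff_of_abs_lt hx]
    omega
  simp only [hterm, ← mul_sum, sum_exp_two_pi_I_mul_int_mul_div_of_abs_lt hxy, hxy0]
  split_ifs with h
  · obtain ⟨rfl, rfl⟩ := h
    field_simp
    simp
  · simp

theorem Udes_is_one_design_general (d n : ℕ) (hn : d ^ 2 ≤ n) :
    (∀ m : Fin n, Udes d n m ∈ Matrix.unitaryGroup (Fin d) ℂ) ∧
      ∀ j j' k k' : Fin d,
        ((n : ℂ))⁻¹ * ∑ m : Fin n, Udes d n m j k * conj (Udes d n m k' j')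
          = if j = k' ∧ j' = k then ((d : ℂ))⁻¹ else 0 :=
  ⟨Udes_mem_unitaryGroup d n, Udes_inv_card_mul_sum_mul_conj hn⟩

/-- For every `n ≥ d²`, the unitaries `U_m`, `m = 0, …, n−1`, with entries
`(1/√d) exp[2πi jk/d + 2πi (j + kd) m/n]` form an unweighted unitary 1-design in
dimension `d`: `(1/n) ∑ₘ U_m ⊗ U_m† = T/d` (written entrywise). -/
theorem Udes_is_one_design (d n : ℕ) (hd : 0 < d) (hn : d ^ 2 ≤ n) :
    (∀ m : Fin n, Udes d n m ∈ Matrix.unitaryGroup (Fin d) ℂ) ∧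
      ∀ j j' k k' : Fin d,
        ((n : ℂ))⁻¹ * ∑ m : Fin n, Udes d n m j k * conj (Udes d n m k' j')
          = if j = k' ∧ j' = k then ((d : ℂ))⁻¹ else 0 :=
  Udes_is_one_design_general d n hn
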